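/- Let 𝓗 be a connected hypergraph on H. The map that takes a closed term of sort H over the signature Σ_𝓗 and projects every function symbol (X,Y) occurring in it to its first component X is a bijection from the set of closed terms of sort H over Σ_𝓗 to the set of constructs of 𝓗. -/

import Mathlib

open scoped Classical

noncomputable section

/-! ## Hypergraphs (nestohedra combinatorics), after Curien–Laplante-Anfossi:
hypergraphs, restrictions, connectivity, saturation, reconnected restriction,
constructs/constructions, the face order, the flip rewriting, and terms over the
associated signatures. -/

/-- A hypergraph on a finite vertex set: a finite set of nonempty hyperedges whose union is
the vertex set, assumed atomic (every singleton is a hyperedge). -/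
structure HGraph (α : Type*) [DecidableEq α] where
  verts : Finset α
  edges : Finset (Finset α)
  edges_nonempty : ∀ e ∈ edges, e.Nonempty
  edges_subset : ∀ e ∈ edges, e ⊆ verts
  atomic : ∀ v ∈ verts, {v} ∈ edges

namespace HGraph

variable {α : Type*} [DecidableEq α]

/-- The plain restriction `𝓗_X` of a hypergraph to a subset `X` of its vertices. -/
def restrict (H : HGraph α) (X : Finset α) : HGraph α where
  verts := X ∩ H.verts
  edges := H.edges.filter (· ⊆ X)
  edges_nonempty e he := H.edges_nonempty e (Finset.mem_filter.mp he).1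
  edges_subset e he :=
    Finset.subset_inter (Finset.mem_filter.mp he).2 (H.edges_subset e (Finset.mem_filter.mp he).1)
  atomic v hv := by
    rcases Finset.mem_inter.mp hv with ⟨h1, h2⟩
    exact Finset.mem_filter.mpr ⟨H.atomic v h2, Finset.singleton_subset_iff.mpr h1⟩

/-- A hypergraph is connected if its vertex set is nonempty and admits no nontrivial
partition `X₁ ∪ X₂` such that every edge lies in `X₁` or in `X₂`. -/
def Connected (H : HGraph α) : Prop :=
  H.verts.Nonempty ∧ ∀ X₁ X₂ : Finset α, X₁.Nonempty → X₂.Nonempty →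
    Disjoint X₁ X₂ → X₁ ∪ X₂ = H.verts → ∃ e ∈ H.edges, ¬e ⊆ X₁ ∧ ¬e ⊆ X₂

/-- `C` is (the vertex set of) a connected component of `H`: a maximal connected subset. -/
def IsComponent (H : HGraph α) (C : Finset α) : Prop :=
  C ⊆ H.verts ∧ (H.restrict C).Connected ∧
    ∀ D : Finset α, C ⊆ D → D ⊆ H.verts → (H.restrict D).Connected → D = C

/-- `y` and `z` lie in the same connected component of `H`. -/
def SameComponent (H : HGraph α) (y z : α) : Prop :=
  ∃ C : Finset α, H.IsComponent C ∧ y ∈ C ∧ z ∈ C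

/-- The saturation `Sat(𝓗)`: the set of (nonempty) connected subsets of vertices. -/
def sat (H : HGraph α) : Finset (Finset α) :=
  H.verts.powerset.filter fun X => (H.restrict X).Connected

theorem singleton_connected (H : HGraph α) {v : α} (hv : v ∈ H.verts) :
    (H.restrict {v}).Connected := by
  constructor
  · exact ⟨v, Finset.mem_inter.mpr ⟨Finset.mem_singleton_self v, hv⟩⟩
  · intro X₁ X₂ h₁ h₂ hd hu
    exfalso
    have hv' : ({v} : Finset α) ∩ H.verts = {v} :=
      Finset.inter_eq_left.mpr (Finset.singleton_subset_iff.mpr hv)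
    have hu' : X₁ ∪ X₂ = ({v} : Finset α) := hu.trans hv'
    have hX₁ : X₁ ⊆ {v} := hu' ▸ Finset.subset_union_left
    have hX₂ : X₂ ⊆ {v} := hu' ▸ Finset.subset_union_right
    obtain ⟨a, ha⟩ := h₁
    obtain ⟨b, hb⟩ := h₂
    have ha' := Finset.mem_singleton.mp (hX₁ ha)
    have hb' := Finset.mem_singleton.mp (hX₂ hb)
    subst ha'; exact Finset.disjoint_left.mp hd ha (hb' ▸ hb)

/-- The reconnected restriction `𝓗 ↾ X` of `𝓗` to `X`. -/
def reconRestrict (H : HGraph α) (X : Finset α) : HGraph α where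
  verts := X ∩ H.verts
  edges := (H.sat.image (· ∩ X)).filter (·.Nonempty)
  edges_nonempty e he := (Finset.mem_filter.mp he).2
  edges_subset := by
    intro e he
    rcases Finset.mem_image.mp (Finset.mem_filter.mp he).1 with ⟨Z, hZ, rfl⟩
    have hZv : Z ⊆ H.verts := Finset.mem_powerset.mp (Finset.mem_filter.mp hZ).1
    exact fun a ha => Finset.mem_inter.mpr
      ⟨(Finset.mem_inter.mp ha).2, hZv (Finset.mem_inter.mp ha).1⟩
  atomic := by
    intro v hv
    rcases Finset.mem_inter.mp hv with ⟨h1, h2⟩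
    refine Finset.mem_filter.mpr ⟨Finset.mem_image.mpr ⟨{v}, ?_, ?_⟩, ?_⟩
    · exact Finset.mem_filter.mpr
        ⟨Finset.mem_powerset.mpr (Finset.singleton_subset_iff.mpr h2),
         H.singleton_connected h2⟩
    · exact Finset.inter_eq_left.mpr (Finset.singleton_subset_iff.mpr h1)
    · exact ⟨v, by simp [Finset.inter_eq_left.mpr (Finset.singleton_subset_iff.mpr h1)]⟩

/-- `x ⇝ {y,z}` in `𝓗`: after removing `x`, the vertices `y` and `z` lie in the same
connected component.  Its negation is "`x` disconnects `y` and `z` in `𝓗`". -/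
def Links (H : HGraph α) (x y z : α) : Prop :=
  (H.restrict (H.verts \ {x})).SameComponent y z

/-- A hypergraph is contextual if for every connected subset `Y` of cardinality at least 3
and all distinct `x, y, z ∈ Y`, `x` disconnects `y` and `z` in `𝓗_Y` iff it does in `𝓗`. -/
def Contextual (H : HGraph α) : Prop :=
  ∀ Y : Finset α, Y ⊆ H.verts → (H.restrict Y).Connected → 3 ≤ Y.card →
    ∀ x y z : α, x ∈ Y → y ∈ Y → z ∈ Y → x ≠ y → y ≠ z → x ≠ z →
      ((H.restrict Y).Links x y z ↔ H.Links x y z)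

end HGraph

/-- Finite rooted trees with nodes decorated by finite sets (potential constructs). -/
inductive FTree (α : Type*) : Type _ where
  | node : Finset α → List (FTree α) → FTree α

namespace FTree

variable {α : Type*} [DecidableEq α]

/-- The decoration of the root node. -/
def label : FTree α → Finset α
  | node Y _ => Y

/-- The list of children of the root node. -/
def children : FTree α → List (FTree α)
  | node _ ts => ts

/-- The support of a tree: the union of the decorations of its nodes. -/
def support : FTree α → Finset α
  | node Y [] => Y
  | node Y (t :: ts) => support t ∪ support (node Y ts)

/-- The list of decorations of the nodes of a tree. -/
def labels : FTree α → List (Finset α)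
  | node Y [] => [Y]
  | node Y (t :: ts) => labels t ++ labels (node Y ts)

/-- The dimension of a construct: the sum over its nodes `X` of `|X| - 1`. -/
def dim (T : FTree α) : ℕ := (T.labels.map fun X => X.card - 1).sum

mutual
  /-- The (full) subtree rooted at the node decorated by `X`, if any. -/
  def subtreeAt : FTree α → Finset α → Option (FTree α)
    | node Y ts, X => if Y = X then some (node Y ts) else subtreeAtList ts X
  def subtreeAtList : List (FTree α) → Finset α → Option (FTree α)
    | [], _ => none
    | t :: ts, X => (subtreeAt t X).elim (subtreeAtList ts X) some
end

/-- The support `supp (T ↾ X)` of the subtree rooted at the node decorated by `X`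
(or `∅` if there is no such node). -/
def suppAt (T : FTree α) (X : Finset α) : Finset α :=
  ((T.subtreeAt X).map support).getD ∅

mutual
  /-- The list of supports of the subtrees rooted at the nodes of `T` (its nested set). -/
  def nests : FTree α → List (Finset α)
    | node Y ts => support (node Y ts) :: nestsList ts
  def nestsList : List (FTree α) → List (Finset α)
    | [] => []
    | t :: ts => nests t ++ nestsList ts
end

/-- The nested set of a tree, as a finite set. -/
def nestSet (T : FTree α) : Finset (Finset α) := T.nests.toFinset

/-- `S ≺ T` (`S` is covered by `T`) in the face order: `T` is obtained from `S` by
contracting one edge between a node and its father (equivalently, the nested set of `T`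
is obtained from that of `S` by removing one non-root element). -/
def CoveredBy (S T : FTree α) : Prop :=
  ∃ N ∈ S.nests, N ≠ S.support ∧ T.nestSet = S.nestSet.erase N

/-- The face (subface) order `S ≼ T` on constructs: the reflexive–transitive closure of
the covering relation `≺`. -/
def FaceLe (S T : FTree α) : Prop := Relation.ReflTransGen CoveredBy S T

/-- `IsSubtree S T`: `S` is a (full) subtree of `T`. -/
inductive IsSubtree : FTree α → FTree α → Prop
  | refl (t : FTree α) : IsSubtree t t
  | child {s t u : FTree α} : IsSubtree s t → t ∈ u.children → IsSubtree s u

/-- In `T`, the node decorated by `X` has a child decorated by `Y`. -/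
def ParentChild (X Y : Finset α) (T : FTree α) : Prop :=
  ∃ R : FTree α, IsSubtree R T ∧ R.label = X ∧ ∃ t ∈ R.children, t.label = Y

mutual
  /-- Pruning: remove all (subtrees rooted at) nodes whose decoration is not a subset
  of `X`, keeping the root. -/
  def prune (X : Finset α) : FTree α → FTree α
    | node Y ts => node Y (pruneList X ts)
  def pruneList (X : Finset α) : List (FTree α) → List (FTree α)
    | [] => []
    | t :: ts => if t.label ⊆ X then prune X t :: pruneList X ts else pruneList X ts
end

end FTree

/-- `IsConstruct H T`: the tree `T` is a construct of the hypergraph `H`: its root `Y` is a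
nonempty subset of the vertices, its children are constructs of the connected components of
`𝓗 ∖ Y` (one for each component, listed by increasing maximal vertex). -/
inductive IsConstruct {α : Type*} [LinearOrder α] : HGraph α → FTree α → Prop
  | node {H : HGraph α} (Y : Finset α) (ts : List (FTree α))
      (hY : Y.Nonempty) (hYsub : Y ⊆ H.verts)
      (hmem : ∀ t ∈ ts, (H.restrict (H.verts \ Y)).IsComponent t.support)
      (hcover : ∀ C : Finset α, (H.restrict (H.verts \ Y)).IsComponent C →
        ∃ t ∈ ts, t.support = C)
      (hsorted : ts.Pairwise fun a b => a.support.max < b.support.max)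
      (hchild : ∀ t ∈ ts, IsConstruct (H.restrict t.support) t) :
      IsConstruct H (FTree.node Y ts)

section ConstructionOrder

variable {α : Type*} [LinearOrder α]

/-- A construction: a construct all of whose nodes are singletons (a vertex of the
nestohedron). -/
def IsConstruction (H : HGraph α) (T : FTree α) : Prop :=
  IsConstruct H T ∧ ∀ X ∈ T.labels, X.card = 1

/-- An `X`-face: a 2-dimensional construct whose unique non-singleton node is decorated
by `X`, of cardinality 3. -/
def IsXFace (H : HGraph α) (X : Finset α) (T : FTree α) : Prop :=
  IsConstruct H T ∧ X.card = 3 ∧ X ∈ T.labels ∧ ∀ Y ∈ T.labels, Y ≠ X → Y.card = 1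

/-- Two distinct constructions are joined by an edge of the nestohedron: both are covered
by a common 1-dimensional construct. -/
def EdgeJoined (H : HGraph α) (S T : FTree α) : Prop :=
  IsConstruction H S ∧ IsConstruction H T ∧ S ≠ T ∧
  ∃ V : FTree α, IsConstruct H V ∧ V.dim = 1 ∧ FTree.CoveredBy S V ∧ FTree.CoveredBy T V

/-- The flip rewriting relation `S → T` on constructions of an ordered hypergraph:
`S` and `T` are the two endpoints of an edge whose 1-dimensional face has unique
non-singleton node `{x, y}` with `x < y`, and in `S` the node `{x}` is the parent of the
node `{y}`. -/
def Flip (H : HGraph α) (S T : FTree α) : Prop :=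
  IsConstruction H S ∧ IsConstruction H T ∧ S ≠ T ∧
  ∃ (V : FTree α) (x y : α), IsConstruct H V ∧ V.dim = 1 ∧ x ≠ y ∧
    ({x, y} : Finset α) ∈ V.labels ∧ FTree.CoveredBy S V ∧ FTree.CoveredBy T V ∧
    FTree.ParentChild ({x} : Finset α) ({y} : Finset α) S ∧ x < y

/-- The coordinate vector of a construction `S` of `H`:
`v^S_x = |{e ∈ Sat(𝓗) : x ∈ e ⊆ supp (S ↾ x)}|`. -/
def coordVec (H : HGraph α) (S : FTree α) (x : α) : ℕ :=
  (H.sat.filter fun e => x ∈ e ∧ e ⊆ S.suppAt {x}).card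

end ConstructionOrder

/-- Raw terms over the signature `Σ_𝓗` (and `Σ^c_𝓗`): variables are (connected) subsets,
function symbols are pairs `(X, Y)` of subsets, applied to a list of arguments. -/
inductive HTerm (α : Type*) : Type _ where
  | var : Finset α → HTerm α
  | app : Finset α → Finset α → List (HTerm α) → HTerm α

namespace HTerm

variable {α : Type*} [DecidableEq α]

/-- The (output) sort of a term. -/
def sortOf : HTerm α → Finset α
  | var A => A
  | app _ Y _ => Y

/-- The list of variables occurring in a term. -/
def varsList : HTerm α → List (Finset α)
  | var A => [A]
  | app _ _ [] => []
  | app X Y (t :: ts) => varsList t ++ varsList (app X Y ts)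

/-- The list of first components of the function symbols occurring in a term. -/
def appFirsts : HTerm α → List (Finset α)
  | var _ => []
  | app X _ [] => [X]
  | app X Y (t :: ts) => appFirsts t ++ appFirsts (app X Y ts)

/-- A term is closed if it contains no variables. -/
def Closed (t : HTerm α) : Prop := t.varsList = []

/-- The union `⋃ var(t)` of the variables of a term. -/
def varsUnion (t : HTerm α) : Finset α := t.varsList.foldr (· ∪ ·) ∅

mutual
  /-- Projection of a term to a decorated tree: every function symbol `(X, Y)` is sent to
  its first component `X`, and all variables are pruned. -/
  def toTree : HTerm α → FTree α
    | .var A => .node A []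
    | .app X _ ts => .node X (toTreeList ts)
  def toTreeList : List (HTerm α) → List (FTree α)
    | [] => []
    | .var _ :: ts => toTreeList ts
    | t :: ts => toTree t :: toTreeList ts
end

end HTerm

/-- Well-formed terms over the signature `Σ_𝓗` associated with the hypergraph `H`:
a variable is a connected subset (its own sort); a function symbol `(X, Y)` (with
`∅ ≠ X ⊆ Y ⊆ H` and `Y` connected) is applied to arguments whose sorts are exactly the
connected components of `𝓗_Y ∖ X`, listed by increasing maximal vertex. -/
inductive IsTerm {α : Type*} [LinearOrder α] (H : HGraph α) : HTerm α → Prop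
  | var (A : Finset α) : A ⊆ H.verts → (H.restrict A).Connected → IsTerm H (.var A)
  | app (X Y : Finset α) (ts : List (HTerm α)) :
      X.Nonempty → X ⊆ Y → Y ⊆ H.verts → (H.restrict Y).Connected →
      (∀ t ∈ ts, (H.restrict (Y \ X)).IsComponent t.sortOf) →
      (∀ C : Finset α, (H.restrict (Y \ X)).IsComponent C → ∃ t ∈ ts, t.sortOf = C) →
      ts.Pairwise (fun a b => a.sortOf.max < b.sortOf.max) →
      (∀ t ∈ ts, IsTerm H t) →
      IsTerm H (.app X Y ts)

/-! The projection forgets the second components of the function symbols, but they can be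
recovered: in a closed well-formed term every subterm has as sort the union of the first
components occurring in it, i.e. the support of its projected tree. Hence the inverse sends a
construct with root `Y` to the symbol `(Y, supp)` applied to the images of the subtrees, and the
well-formedness conditions of terms and of constructs translate into each other node by node,
`𝓗_Y ∖ X` being the restriction of `𝓗_Y` to its vertices outside `X`. -/

namespace HGraph

variable {α : Type*} [DecidableEq α]

@[ext]
theorem ext {G₁ G₂ : HGraph α} (hv : G₁.verts = G₂.verts) (he : G₁.edges = G₂.edges) :
    G₁ = G₂ := by
  cases G₁; cases G₂; simp_all

theorem restrict_verts (G : HGraph α) {X : Finset α} (hX : X ⊆ G.verts) :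
    (G.restrict X).verts = X :=
  Finset.inter_eq_left.mpr hX

theorem restrict_restrict (G : HGraph α) {Y Z : Finset α} (h : Z ⊆ Y) :
    (G.restrict Y).restrict Z = G.restrict Z := by
  ext1
  · show Z ∩ (Y ∩ G.verts) = Z ∩ G.verts
    rw [← Finset.inter_assoc, Finset.inter_eq_left.mpr h]
  · exact (Finset.filter_filter _ _ _).trans
      (Finset.filter_congr fun _ _ => ⟨And.right, fun hZ => ⟨hZ.trans h, hZ⟩⟩)

theorem restrict_self (G : HGraph α) : G.restrict G.verts = G := by
  ext1
  · exact Finset.inter_self _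
  · exact Finset.filter_true_of_mem G.edges_subset

theorem IsComponent.subset_restrict {G : HGraph α} {Z C : Finset α}
    (h : (G.restrict Z).IsComponent C) : C ⊆ Z :=
  h.1.trans Finset.inter_subset_left

theorem IsComponent.restrict_connected {G : HGraph α} {Z C : Finset α}
    (h : (G.restrict Z).IsComponent C) : (G.restrict C).Connected := by
  simpa only [G.restrict_restrict h.subset_restrict] using h.2.1

/-- A connected set of maximal cardinality among those containing `v` is a component. -/
theorem exists_isComponent_mem (G : HGraph α) {v : α} (hv : v ∈ G.verts) :
    ∃ C, G.IsComponent C ∧ v ∈ C := by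
  set S := G.verts.powerset.filter fun D => v ∈ D ∧ (G.restrict D).Connected
  have hS : {v} ∈ S := Finset.mem_filter.mpr
    ⟨Finset.mem_powerset.mpr (Finset.singleton_subset_iff.mpr hv),
      Finset.mem_singleton_self v, G.singleton_connected hv⟩
  obtain ⟨C, hC, hmax⟩ := Finset.exists_max_image S Finset.card ⟨_, hS⟩
  obtain ⟨hCv, hvC, hCc⟩ := Finset.mem_filter.mp hC
  refine ⟨C, ⟨Finset.mem_powerset.mp hCv, hCc, fun D hCD hDv hDc => ?_⟩, hvC⟩
  have hD : D ∈ S := Finset.mem_filter.mpr ⟨Finset.mem_powerset.mpr hDv, hCD hvC, hDc⟩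
  exact (Finset.eq_of_subset_of_card_le hCD (hmax D hD)).symm

end HGraph

namespace HTerm

variable {α : Type*}

theorem not_closed_var (A : Finset α) : ¬(var A).Closed := by
  simp [Closed, varsList]

theorem closed_app_iff {X Y : Finset α} {ts : List (HTerm α)} :
    (app X Y ts).Closed ↔ ∀ t ∈ ts, t.Closed := by
  induction ts with
  | nil => simp [Closed, varsList]
  | cons t ts ih =>
    simp only [Closed, varsList, List.append_eq_nil_iff, List.forall_mem_cons] at ih ⊢
    rw [ih]

theorem toTreeList_of_closed {ts : List (HTerm α)} (h : ∀ t ∈ ts, t.Closed) :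
    toTreeList ts = ts.map toTree := by
  induction ts with
  | nil => rfl
  | cons t ts ih =>
    rw [List.forall_mem_cons] at h
    cases t with
    | var A => exact absurd h.1 (not_closed_var A)
    | app X Y us =>
      rw [toTreeList, ih h.2, List.map_cons]
      exact fun _ h => by cases h

theorem toTree_app_of_closed {X Y : Finset α} {ts : List (HTerm α)} (h : (app X Y ts).Closed) :
    (app X Y ts).toTree = .node X (ts.map toTree) := by
  rw [toTree, toTreeList_of_closed (closed_app_iff.mp h)]

end HTerm

namespace FTree

variable {α : Type*} [DecidableEq α]

theorem mem_support_node {a : α} {X : Finset α} {ts : List (FTree α)} :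
    a ∈ (node X ts).support ↔ a ∈ X ∨ ∃ t ∈ ts, a ∈ t.support := by
  induction ts with
  | nil => simp [support]
  | cons t ts ih =>
    simp only [support, Finset.mem_union, ih, List.exists_mem_cons_iff]
    tauto

def toTerm : FTree α → HTerm α
  | node Y ts => .app Y (node Y ts).support (ts.map toTerm)

theorem toTerm_closed : ∀ T : FTree α, T.toTerm.Closed
  | node Y ts => by
    rw [toTerm, HTerm.closed_app_iff, List.forall_mem_map]
    exact fun t _ => toTerm_closed t

theorem toTree_toTerm : ∀ T : FTree α, T.toTerm.toTree = T
  | node Y ts => by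
    have hc := toTerm_closed (node Y ts)
    rw [toTerm] at hc ⊢
    rw [HTerm.toTree_app_of_closed hc, List.map_map]
    congr
    exact (List.map_congr_left fun t _ => toTree_toTerm t).trans (List.map_id ts)

@[simp]
theorem sortOf_toTerm (T : FTree α) : T.toTerm.sortOf = T.support := by
  cases T
  rw [toTerm]
  rfl

end FTree

section Bijection

variable {α : Type*} [LinearOrder α]

theorem IsConstruct.support_eq {G : HGraph α} {T : FTree α} (h : IsConstruct G T) :
    T.support = G.verts := by
  obtain ⟨Y, ts, -, hYsub, hmem, hcover, -, -⟩ := h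
  ext a
  rw [FTree.mem_support_node]
  refine ⟨?_, fun ha => ?_⟩
  · rintro (haY | ⟨t, ht, hat⟩)
    · exact hYsub haY
    · exact (Finset.mem_inter.mp ((hmem t ht).1 hat)).2
  · by_cases haY : a ∈ Y
    · exact Or.inl haY
    · obtain ⟨C, hC, haC⟩ := (G.restrict (G.verts \ Y)).exists_isComponent_mem
        (Finset.mem_inter.mpr ⟨Finset.mem_sdiff.mpr ⟨ha, haY⟩, ha⟩)
      obtain ⟨t, ht, rfl⟩ := hcover C hC
      exact Or.inr ⟨t, ht, haC⟩

namespace IsTerm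

variable {H : HGraph α} {t : HTerm α}

theorem sortOf_subset (h : IsTerm H t) : t.sortOf ⊆ H.verts := by
  cases h <;> assumption

theorem of_restrict {S : Finset α} (h : IsTerm (H.restrict S) t) : IsTerm H t := by
  induction h with
  | var A hA hc =>
    have hAS : A ⊆ S := hA.trans Finset.inter_subset_left
    rw [H.restrict_restrict hAS] at hc
    exact .var A (hA.trans Finset.inter_subset_right) hc
  | app X Y ts hX hXY hY hc hmem hcover hsorted _ ih =>
    have hYS : Y ⊆ S := hY.trans Finset.inter_subset_left
    rw [H.restrict_restrict hYS] at hc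
    rw [H.restrict_restrict (Finset.sdiff_subset.trans hYS)] at hmem hcover
    exact .app X Y ts hX hXY (hY.trans Finset.inter_subset_right) hc hmem hcover hsorted ih

theorem isConstruct_toTree (h : IsTerm H t) (hc : t.Closed) :
    IsConstruct (H.restrict t.sortOf) t.toTree := by
  induction h with
  | var A => exact absurd hc (HTerm.not_closed_var A)
  | app X Y ts hX hXY hY _ hmem hcover hsorted hterm ih =>
    have hcs := HTerm.closed_app_iff.mp hc
    have hsupp : ∀ u ∈ ts, u.toTree.support = u.sortOf := fun u hu =>
      (ih u hu (hcs u hu)).support_eq.trans (H.restrict_verts (hterm u hu).sortOf_subset)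
    have hYv : (H.restrict Y).verts = Y := H.restrict_verts hY
    have hres : (H.restrict Y).restrict ((H.restrict Y).verts \ X) = H.restrict (Y \ X) := by
      rw [hYv, H.restrict_restrict Finset.sdiff_subset]
    show IsConstruct (H.restrict Y) _
    rw [HTerm.toTree_app_of_closed hc]
    refine .node X _ hX (by rwa [hYv]) ?_ ?_ ?_ ?_
    · simp only [List.forall_mem_map, hres]
      exact fun u hu => hsupp u hu ▸ hmem u hu
    · intro C hC
      obtain ⟨u, hu, rfl⟩ := hcover C (hres ▸ hC)
      exact ⟨u.toTree, List.mem_map_of_mem hu, hsupp u hu⟩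
    · rw [List.pairwise_map]
      exact hsorted.imp_of_mem fun ha hb hab => by rwa [hsupp _ ha, hsupp _ hb]
    · simp only [List.forall_mem_map]
      intro u hu
      have huY : u.sortOf ⊆ Y := (hmem u hu).subset_restrict.trans Finset.sdiff_subset
      rw [hsupp u hu, H.restrict_restrict huY]
      exact ih u hu (hcs u hu)

theorem support_toTree (h : IsTerm H t) (hc : t.Closed) : t.toTree.support = t.sortOf :=
  (h.isConstruct_toTree hc).support_eq.trans (H.restrict_verts h.sortOf_subset)

theorem toTerm_toTree (h : IsTerm H t) (hc : t.Closed) : t.toTree.toTerm = t := by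
  induction h with
  | var A => exact absurd hc (HTerm.not_closed_var A)
  | app X Y ts hX hXY hY hYc hmem hcover hsorted hterm ih =>
    have hcs := HTerm.closed_app_iff.mp hc
    have hsupp := (IsTerm.app X Y ts hX hXY hY hYc hmem hcover hsorted hterm).support_toTree hc
    rw [HTerm.toTree_app_of_closed hc] at hsupp ⊢
    rw [FTree.toTerm, hsupp, List.map_map]
    congr
    exact (List.map_congr_left fun u hu => ih u hu (hcs u hu)).trans (List.map_id ts)

end IsTerm

theorem IsConstruct.isTerm_toTerm {G : HGraph α} {T : FTree α} (h : IsConstruct G T)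
    (hG : G.Connected) : IsTerm G T.toTerm := by
  induction h with
  | @node G Y ts hY hYsub hmem hcover hsorted hchild ih =>
    have hsupp := (IsConstruct.node Y ts hY hYsub hmem hcover hsorted hchild).support_eq
    rw [FTree.toTerm, hsupp]
    refine .app Y G.verts _ hY hYsub subset_rfl (G.restrict_self.symm ▸ hG) ?_ ?_ ?_ ?_
    · simpa only [List.forall_mem_map, FTree.sortOf_toTerm] using hmem
    · intro C hC
      obtain ⟨t, ht, rfl⟩ := hcover C hC
      exact ⟨t.toTerm, List.mem_map_of_mem ht, t.sortOf_toTerm⟩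
    · simpa only [List.pairwise_map, FTree.sortOf_toTerm] using hsorted
    · simp only [List.forall_mem_map]
      exact fun t ht => (ih t ht (hmem t ht).restrict_connected).of_restrict

end Bijection

/-- Lemma `l:bijection-terms`.  Projecting every function symbol `(X,Y)`
to its first component is a bijection from the set of closed terms of sort `H` over `Σ_𝓗`
to the set of constructs of `𝓗`. -/
theorem stmt4 {α : Type*} [LinearOrder α] (H : HGraph α) (hH : H.Connected) :
    Set.BijOn HTerm.toTree
      {t : HTerm α | IsTerm H t ∧ t.sortOf = H.verts ∧ t.Closed}
      {T : FTree α | IsConstruct H T} := by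
  refine Set.InvOn.bijOn (f' := FTree.toTerm)
    ⟨fun t ⟨ht, _, hc⟩ => ht.toTerm_toTree hc, fun T _ => T.toTree_toTerm⟩ ?_ ?_
  · rintro t ⟨ht, hsort, hc⟩
    simpa only [Set.mem_ofPred_eq, hsort, H.restrict_self] using ht.isConstruct_toTree hc
  · intro T hT
    exact ⟨hT.isTerm_toTerm hH, T.sortOf_toTerm.trans hT.support_eq, T.toTerm_closed⟩

end
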